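/- Let p ≤ q ≤ p + 1 and q ≤ 1/2 − μ, suppose Q(y − y^δ) ∈ N_{2q}, (TT*)^q Q y ≠ 0, x† satisfies the source condition of order μ as well as the regularity condition, and let α* be a minimizer of α ↦ ψ_HD(α, y^δ) over (0,‖T‖²). Then there exist constants C > 0 and η₀ > 0 such that ‖x_{α*}^δ − x†‖ ≤ C η^{2μ/(2μ+2p+1)} whenever η ≤ η₀. -/
import Mathlib


open scoped BigOperators
open Set

noncomputable section

namespace WeakNoise

/-! ### Sequence (spectral/diagonal) model of the weakly bounded noise setting

Since `T : X → Y` is a compact linear operator, `T T*` and `T* T` have a common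
sequence of positive eigenvalues `lam i`, bounded by `Λ = ‖T‖²`, with
orthonormal eigenbases `u i` (of `T T*`, spanning `closure (range T)`) and
`v i` (of `T* T`, spanning `(ker T)ᗮ`).  We describe all data by their spectral
coefficients: `e i = ⟪y^δ - y, u i⟫` (so `y - y^δ` has coefficients `-e i`,
with the same squares), and `xdag i = ⟪x†, v i⟫` (note `x† ⟂ ker T`), so that
the exact data `y = T x†` has coefficients `√(lam i) * xdag i`.  All norms,
functionals and conditions of the paper are expressed through their spectral
representations `∫ w(λ) d‖F_λ z‖² = ∑' i, w (lam i) * (coefficient of z at i)²`. -/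

/-- squared weak noise level `η² = ‖(T T*)^p (y^δ - y)‖² = ∑ λᵢ^{2p} eᵢ²`. -/
def etaSq (lam e : ℕ → ℝ) (p : ℝ) : ℝ := ∑' i, lam i ^ (2 * p) * e i ^ 2

/-- weak noise level `η = ‖(T T*)^p (y^δ - y)‖`. -/
def eta (lam e : ℕ → ℝ) (p : ℝ) : ℝ := Real.sqrt (etaSq lam e p)

/-- `‖x_α^δ - x_α‖² = ∑ λᵢ eᵢ²/(λᵢ+α)²`. -/
def dataErrSq (lam e : ℕ → ℝ) (α : ℝ) : ℝ := ∑' i, lam i * e i ^ 2 / (lam i + α) ^ 2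

/-- `‖x_α^δ - x_α‖`. -/
def dataErr (lam e : ℕ → ℝ) (α : ℝ) : ℝ := Real.sqrt (dataErrSq lam e α)

/-- `‖x_α - x†‖² = ∑ α² xdagᵢ²/(λᵢ+α)²`. -/
def approxErrSq (lam xdag : ℕ → ℝ) (α : ℝ) : ℝ := ∑' i, α ^ 2 * xdag i ^ 2 / (lam i + α) ^ 2

/-- `‖x_α - x†‖`. -/
def approxErr (lam xdag : ℕ → ℝ) (α : ℝ) : ℝ := Real.sqrt (approxErrSq lam xdag α)

/-- `‖T (x_α^δ - x_α)‖² = ∑ λᵢ² eᵢ²/(λᵢ+α)²`. -/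
def TdataErrSq (lam e : ℕ → ℝ) (α : ℝ) : ℝ := ∑' i, lam i ^ 2 * e i ^ 2 / (lam i + α) ^ 2

/-- `‖T (x_α^δ - x_α)‖`. -/
def TdataErr (lam e : ℕ → ℝ) (α : ℝ) : ℝ := Real.sqrt (TdataErrSq lam e α)

/-- `‖T x_α - y‖² = ∑ α² λᵢ xdagᵢ²/(λᵢ+α)²`. -/
def TapproxErrSq (lam xdag : ℕ → ℝ) (α : ℝ) : ℝ :=
  ∑' i, α ^ 2 * lam i * xdag i ^ 2 / (lam i + α) ^ 2

/-- `‖T x_α - y‖`. -/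
def TapproxErr (lam xdag : ℕ → ℝ) (α : ℝ) : ℝ := Real.sqrt (TapproxErrSq lam xdag α)

/-- `‖x_α^δ - x†‖² = ∑ (√λᵢ eᵢ - α xdagᵢ)²/(λᵢ+α)²`. -/
def totalErrSq (lam xdag e : ℕ → ℝ) (α : ℝ) : ℝ :=
  ∑' i, (Real.sqrt (lam i) * e i - α * xdag i) ^ 2 / (lam i + α) ^ 2

/-- `‖x_α^δ - x†‖`. -/
def totalErr (lam xdag e : ℕ → ℝ) (α : ℝ) : ℝ := Real.sqrt (totalErrSq lam xdag e α)

/-- spectral coefficients of the exact data `y = T x†`. -/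
def yCoeff (lam xdag : ℕ → ℝ) : ℕ → ℝ := fun i => Real.sqrt (lam i) * xdag i

/-- spectral coefficients of the noisy data `y^δ`. -/
def ydCoeff (lam xdag e : ℕ → ℝ) : ℕ → ℝ := fun i => Real.sqrt (lam i) * xdag i + e i

/-- squared quasi-optimality functional `ψ_QO(α,z)² = ∑ α² λᵢ cᵢ²/(λᵢ+α)⁴`,
where `c` are the spectral coefficients of `z`. -/
def psiQOsq (lam c : ℕ → ℝ) (α : ℝ) : ℝ := ∑' i, α ^ 2 * lam i * c i ^ 2 / (lam i + α) ^ 4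

/-- quasi-optimality functional `ψ_QO(α,z)`. -/
def psiQO (lam c : ℕ → ℝ) (α : ℝ) : ℝ := Real.sqrt (psiQOsq lam c α)

/-- squared modified heuristic discrepancy functional
`ψ_HD(α,z)² = ∑ λᵢ^{2q} α^{1-2q} cᵢ²/(λᵢ+α)²`. -/
def psiHDsq (lam c : ℕ → ℝ) (q α : ℝ) : ℝ :=
  ∑' i, lam i ^ (2 * q) * α ^ (1 - 2 * q) * c i ^ 2 / (lam i + α) ^ 2

/-- modified heuristic discrepancy functional `ψ_HD(α,z)`. -/
def psiHD (lam c : ℕ → ℝ) (q α : ℝ) : ℝ := Real.sqrt (psiHDsq lam c q α)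

/-- squared modified Hanke-Raus functional
`ψ_HR(α,z)² = ∑ λᵢ^{2q} α^{2-2q} cᵢ²/(λᵢ+α)³`. -/
def psiHRsq (lam c : ℕ → ℝ) (q α : ℝ) : ℝ :=
  ∑' i, lam i ^ (2 * q) * α ^ (2 - 2 * q) * c i ^ 2 / (lam i + α) ^ 3

/-- modified Hanke-Raus functional `ψ_HR(α,z)`. -/
def psiHR (lam c : ℕ → ℝ) (q α : ℝ) : ℝ := Real.sqrt (psiHRsq lam c q α)

/-- squared predictive mean-square error functional
`ψ_PMS(α,y^δ)² = ‖T x_α^δ - y‖² = ∑ (λᵢ eᵢ - α √λᵢ xdagᵢ)²/(λᵢ+α)²`. -/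
def psiPMSsq (lam xdag e : ℕ → ℝ) (α : ℝ) : ℝ :=
  ∑' i, (lam i * e i - α * Real.sqrt (lam i) * xdag i) ^ 2 / (lam i + α) ^ 2

/-- predictive mean-square error functional `ψ_PMS(α,y^δ)`. -/
def psiPMS (lam xdag e : ℕ → ℝ) (α : ℝ) : ℝ := Real.sqrt (psiPMSsq lam xdag e α)

/-- the noise condition defining `N_ν`, with explicit constant `C`:
`α^{ν+1} ∫_α^{‖T‖²} λ⁻¹ d‖F_λ e‖² ≤ C ∫_0^α λ^ν d‖F_λ e‖²` for all `α ∈ (0,‖T‖²)`. -/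
def noiseCondC (lam c : ℕ → ℝ) (Λ ν C : ℝ) : Prop :=
  ∀ α ∈ Set.Ioo (0 : ℝ) Λ,
    α ^ (ν + 1) * ∑' i, (if α < lam i then c i ^ 2 / lam i else 0)
      ≤ C * ∑' i, (if lam i ≤ α then lam i ^ ν * c i ^ 2 else 0)

/-- membership in the noise class `N_ν`. -/
def memN (lam c : ℕ → ℝ) (Λ ν : ℝ) : Prop := ∃ C > 0, noiseCondC lam c Λ ν C

/-- the regularity condition on `x†`:
`α² ∫_α^∞ λ⁻² d‖E_λ x†‖² ≥ C ∫_0^α d‖E_λ x†‖²` for all `α ∈ (0,‖T‖²)`. -/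
def regCond (lam xdag : ℕ → ℝ) (Λ : ℝ) : Prop :=
  ∃ C > 0, ∀ α ∈ Set.Ioo (0 : ℝ) Λ,
    C * ∑' i, (if lam i ≤ α then xdag i ^ 2 else 0)
      ≤ α ^ 2 * ∑' i, (if α < lam i then xdag i ^ 2 / lam i ^ 2 else 0)

/-- the noise condition (regcon) with parameter `ε > 0` and explicit constant `C`:
`∫_α^{‖T‖²} d‖F_λ Q(y-y^δ)‖² ≥ C η²/α^{2p-ε}` for all `α ∈ (0,‖T‖²)`. -/
def regconC (lam e : ℕ → ℝ) (Λ p ε C : ℝ) : Prop :=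
  ∀ α ∈ Set.Ioo (0 : ℝ) Λ,
    C * etaSq lam e p / α ^ (2 * p - ε) ≤ ∑' i, (if α < lam i then e i ^ 2 else 0)

/-- condition (xxx) with parameter `ε₂ > 0` and explicit constant `C`:
`∫_α^{‖T‖²} λ^{2μ-1} d‖E_λ ω‖² ≥ C α^{2μ-1+ε₂}` for all `α ∈ (0,‖T‖²)`. -/
def xxxCondC (lam om : ℕ → ℝ) (Λ mu eps2 C : ℝ) : Prop :=
  ∀ α ∈ Set.Ioo (0 : ℝ) Λ,
    C * α ^ (2 * mu - 1 + eps2) ≤ ∑' i, (if α < lam i then lam i ^ (2 * mu - 1) * om i ^ 2 else 0)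




private lemma kernel_bound {l α a : ℝ} (hl : 0 < l) (hα : 0 < α) (h0 : 0 ≤ a) (h2 : a ≤ 2) :
    l ^ a / (l + α) ^ 2 ≤ α ^ (a - 2) := by
  have hla : 0 < l + α := by linarith
  have h1 : l ^ a ≤ (l + α) ^ a := Real.rpow_le_rpow hl.le (by linarith) h0
  have e1 : ((l + α) : ℝ) ^ (2 : ℕ) = (l + α) ^ (2 : ℝ) := by
    rw [← Real.rpow_natCast (l + α) 2]; norm_num
  calc l ^ a / (l + α) ^ 2 ≤ (l + α) ^ a / (l + α) ^ 2 := by gcongr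
    _ = (l + α) ^ (a - 2) := by rw [e1, ← Real.rpow_sub hla]
    _ ≤ α ^ (a - 2) := Real.rpow_le_rpow_of_nonpos hα (by linarith) (by linarith)

private lemma summable_of_le {f g : ℕ → ℝ} (hf : ∀ i, 0 ≤ f i) (h : ∀ i, f i ≤ g i)
    (hg : Summable g) : Summable f := hg.of_nonneg_of_le hf h

private lemma tsum_le_const_mul {f h : ℕ → ℝ} {c : ℝ} (hf : ∀ i, 0 ≤ f i)
    (hle : ∀ i, f i ≤ c * h i) (hh : Summable h) : ∑' i, f i ≤ c * ∑' i, h i := by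
  calc ∑' i, f i ≤ ∑' i, c * h i :=
        Summable.tsum_le_tsum hle (summable_of_le hf hle (hh.mul_left c)) (hh.mul_left c)
    _ = c * ∑' i, h i := tsum_mul_left

private lemma tsum_split {f : ℕ → ℝ} (h0 : ∀ i, 0 ≤ f i) (hf : Summable f)
    (lam : ℕ → ℝ) (α : ℝ) :
    ∑' i, f i = (∑' i, if lam i ≤ α then f i else 0) + ∑' i, if α < lam i then f i else 0 := by
  have hn1 : ∀ i, 0 ≤ (if lam i ≤ α then f i else 0) := fun i => by
    split; exacts [h0 i, le_rfl]
  have hle1 : ∀ i, (if lam i ≤ α then f i else 0) ≤ f i := fun i => by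
    split; exacts [le_rfl, h0 i]
  have hn2 : ∀ i, 0 ≤ (if α < lam i then f i else 0) := fun i => by
    split; exacts [h0 i, le_rfl]
  have hle2 : ∀ i, (if α < lam i then f i else 0) ≤ f i := fun i => by
    split; exacts [le_rfl, h0 i]
  have h1 := summable_of_le hn1 hle1 hf
  have h2 := summable_of_le hn2 hle2 hf
  rw [← Summable.tsum_add h1 h2]
  refine tsum_congr fun i => ?_
  by_cases h : lam i ≤ α
  · rw [if_pos h, if_neg (not_lt.mpr h), add_zero]
  · rw [if_neg h, if_pos (lt_of_not_ge h), zero_add]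

private lemma tsum_weighted_sq_add {w b c : ℕ → ℝ} (hw : ∀ i, 0 ≤ w i)
    (hb : Summable fun i => w i * b i ^ 2) (hc : Summable fun i => w i * c i ^ 2) :
    ∑' i, w i * (b i + c i) ^ 2 ≤ 2 * (∑' i, w i * b i ^ 2) + 2 * (∑' i, w i * c i ^ 2) := by
  have key : ∀ i, w i * (b i + c i) ^ 2 ≤ 2 * (w i * b i ^ 2) + 2 * (w i * c i ^ 2) := fun i => by
    have h : (b i + c i) ^ 2 ≤ 2 * b i ^ 2 + 2 * c i ^ 2 := by nlinarith [sq_nonneg (b i - c i)]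
    calc w i * (b i + c i) ^ 2 ≤ w i * (2 * b i ^ 2 + 2 * c i ^ 2) :=
          mul_le_mul_of_nonneg_left h (hw i)
      _ = 2 * (w i * b i ^ 2) + 2 * (w i * c i ^ 2) := by ring
  have hsum := (hb.mul_left 2).add (hc.mul_left 2)
  calc ∑' i, w i * (b i + c i) ^ 2 ≤ ∑' i, (2 * (w i * b i ^ 2) + 2 * (w i * c i ^ 2)) :=
        Summable.tsum_le_tsum key (summable_of_le (fun i => mul_nonneg (hw i) (sq_nonneg _)) key hsum) hsum
    _ = 2 * (∑' i, w i * b i ^ 2) + 2 * (∑' i, w i * c i ^ 2) := by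
        rw [Summable.tsum_add (hb.mul_left 2) (hc.mul_left 2), tsum_mul_left, tsum_mul_left]

private def W (lam : ℕ → ℝ) (q α : ℝ) (i : ℕ) : ℝ :=
  lam i ^ (2 * q) * α ^ (1 - 2 * q) / (lam i + α) ^ 2

private lemma psiHDsq_eq (lam c : ℕ → ℝ) (q α : ℝ) :
    psiHDsq lam c q α = ∑' i, W lam q α i * c i ^ 2 := by
  unfold psiHDsq W
  exact tsum_congr fun i => by ring

private lemma W_nonneg {lam : ℕ → ℝ} {q α : ℝ} (hα : 0 ≤ α) (hlam : ∀ i, 0 < lam i) (i : ℕ) :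
    0 ≤ W lam q α i := by
  have hl := (hlam i).le
  unfold W
  apply div_nonneg (mul_nonneg (Real.rpow_nonneg hl _) (Real.rpow_nonneg hα _)) (sq_nonneg _)

/-- pointwise noise bound : `W eᵢ² ≤ α^{-(1+2p)} λᵢ^{2p} eᵢ²`. -/
private lemma psiN_ptwise {lam e : ℕ → ℝ} {p q α : ℝ} (hlam : ∀ i, 0 < lam i)
    (hα : 0 < α) (hp : 0 ≤ p) (hq1 : p ≤ q) (hq2 : q ≤ p + 1) (i : ℕ) :
    W lam q α i * e i ^ 2 ≤ α ^ (-(1 + 2 * p)) * (lam i ^ (2 * p) * e i ^ 2) := by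
  have hl := hlam i
  have key : lam i ^ (2 * q - 2 * p) / (lam i + α) ^ 2 ≤ α ^ (2 * q - 2 * p - 2) :=
    kernel_bound hl hα (by linarith) (by linarith)
  have hsplit : lam i ^ (2 * q) = lam i ^ (2 * q - 2 * p) * lam i ^ (2 * p) := by
    rw [← Real.rpow_add hl]; norm_num
  have h3 : α ^ (2 * q - 2 * p - 2) * α ^ (1 - 2 * q) = α ^ (-(1 + 2 * p)) := by
    rw [← Real.rpow_add hα]; ring_nf
  have e1 : W lam q α i * e i ^ 2
      = (lam i ^ (2 * q - 2 * p) / (lam i + α) ^ 2) * α ^ (1 - 2 * q)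
        * (lam i ^ (2 * p) * e i ^ 2) := by
    unfold W; rw [hsplit]; ring
  rw [e1, ← h3]
  apply mul_le_mul_of_nonneg_right _ (mul_nonneg (Real.rpow_nonneg hl.le _) (sq_nonneg _))
  exact mul_le_mul_of_nonneg_right key (Real.rpow_nonneg hα.le _)

private lemma psiN_summable {lam e : ℕ → ℝ} {p q α : ℝ} (hlam : ∀ i, 0 < lam i)
    (hα : 0 < α) (hp : 0 ≤ p) (hq1 : p ≤ q) (hq2 : q ≤ p + 1)
    (he : Summable fun i => lam i ^ (2 * p) * e i ^ 2) :
    Summable fun i => W lam q α i * e i ^ 2 :=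
  summable_of_le (fun i => mul_nonneg (W_nonneg hα.le hlam i) (sq_nonneg _))
    (psiN_ptwise hlam hα hp hq1 hq2) (he.mul_left _)

private lemma psiN_le {lam e : ℕ → ℝ} {p q α : ℝ} (hlam : ∀ i, 0 < lam i)
    (hα : 0 < α) (hp : 0 ≤ p) (hq1 : p ≤ q) (hq2 : q ≤ p + 1)
    (he : Summable fun i => lam i ^ (2 * p) * e i ^ 2) :
    psiHDsq lam e q α ≤ α ^ (-(1 + 2 * p)) * etaSq lam e p := by
  rw [psiHDsq_eq]
  exact tsum_le_const_mul (fun i => mul_nonneg (W_nonneg hα.le hlam i) (sq_nonneg _))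
    (psiN_ptwise hlam hα hp hq1 hq2) he

/-- `yCoeffᵢ² = λᵢ^{1+2μ} ωᵢ²`. -/
private lemma yCoeff_sq {lam xdag ω : ℕ → ℝ} {μ : ℝ} (hlam : ∀ i, 0 < lam i)
    (hsrc : ∀ i, xdag i = lam i ^ μ * ω i) (i : ℕ) :
    (yCoeff lam xdag i) ^ 2 = lam i ^ (1 + 2 * μ) * ω i ^ 2 := by
  have hl := hlam i
  have h1 : Real.sqrt (lam i) ^ 2 = lam i := Real.sq_sqrt hl.le
  have h2 : (lam i ^ μ) ^ 2 = lam i ^ (2 * μ) := by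
    rw [← Real.rpow_natCast (lam i ^ μ) 2, ← Real.rpow_mul hl.le]
    norm_num [mul_comm]
  calc (yCoeff lam xdag i) ^ 2
      = Real.sqrt (lam i) ^ 2 * ((lam i ^ μ) ^ 2 * ω i ^ 2) := by
        unfold yCoeff; rw [hsrc i]; ring
    _ = lam i * lam i ^ (2 * μ) * ω i ^ 2 := by rw [h1, h2]; ring
    _ = lam i ^ (1 + 2 * μ) * ω i ^ 2 := by rw [Real.rpow_add hl, Real.rpow_one]

/-- pointwise signal bound : `W yᵢ² ≤ α^{2μ} ωᵢ²`. -/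
private lemma psiS_ptwise {lam xdag ω : ℕ → ℝ} {q μ α : ℝ} (hlam : ∀ i, 0 < lam i)
    (hsrc : ∀ i, xdag i = lam i ^ μ * ω i)
    (hα : 0 < α) (hμ : 0 ≤ μ) (hq0 : 0 ≤ q) (hq3 : q ≤ 1 / 2 - μ) (i : ℕ) :
    W lam q α i * (yCoeff lam xdag i) ^ 2 ≤ α ^ (2 * μ) * ω i ^ 2 := by
  have hl := hlam i
  have key : lam i ^ (2 * q + (1 + 2 * μ)) / (lam i + α) ^ 2
      ≤ α ^ (2 * q + (1 + 2 * μ) - 2) :=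
    kernel_bound hl hα (by linarith) (by linarith)
  have hsplit : lam i ^ (2 * q + (1 + 2 * μ)) = lam i ^ (2 * q) * lam i ^ (1 + 2 * μ) :=
    Real.rpow_add hl _ _
  have h3 : α ^ (2 * q + (1 + 2 * μ) - 2) * α ^ (1 - 2 * q) = α ^ (2 * μ) := by
    rw [← Real.rpow_add hα]; ring_nf
  have e1 : W lam q α i * (yCoeff lam xdag i) ^ 2
      = (lam i ^ (2 * q + (1 + 2 * μ)) / (lam i + α) ^ 2) * α ^ (1 - 2 * q) * ω i ^ 2 := by
    unfold W; rw [yCoeff_sq hlam hsrc i, hsplit]; ring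
  rw [e1, ← h3]
  apply mul_le_mul_of_nonneg_right _ (sq_nonneg _)
  exact mul_le_mul_of_nonneg_right key (Real.rpow_nonneg hα.le _)

private lemma psiS_summable {lam xdag ω : ℕ → ℝ} {q μ α : ℝ} (hlam : ∀ i, 0 < lam i)
    (hsrc : ∀ i, xdag i = lam i ^ μ * ω i) (hω : Summable fun i => ω i ^ 2)
    (hα : 0 < α) (hμ : 0 ≤ μ) (hq0 : 0 ≤ q) (hq3 : q ≤ 1 / 2 - μ) :
    Summable fun i => W lam q α i * (yCoeff lam xdag i) ^ 2 :=
  summable_of_le (fun i => mul_nonneg (W_nonneg hα.le hlam i) (sq_nonneg _))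
    (psiS_ptwise hlam hsrc hα hμ hq0 hq3) (hω.mul_left _)

private lemma psiS_le {lam xdag ω : ℕ → ℝ} {q μ α : ℝ} (hlam : ∀ i, 0 < lam i)
    (hsrc : ∀ i, xdag i = lam i ^ μ * ω i) (hω : Summable fun i => ω i ^ 2)
    (hα : 0 < α) (hμ : 0 ≤ μ) (hq0 : 0 ≤ q) (hq3 : q ≤ 1 / 2 - μ) :
    psiHDsq lam (yCoeff lam xdag) q α ≤ α ^ (2 * μ) * ∑' i, ω i ^ 2 := by
  rw [psiHDsq_eq]
  exact tsum_le_const_mul (fun i => mul_nonneg (W_nonneg hα.le hlam i) (sq_nonneg _))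
    (psiS_ptwise hlam hsrc hα hμ hq0 hq3) hω


private lemma rpow_two' {x : ℝ} : x ^ (2 : ℝ) = x ^ 2 := by
  rw [← Real.rpow_natCast x 2]; norm_num

private lemma data_eq_W (lam e : ℕ → ℝ) (α : ℝ) (hlam : ∀ i, 0 < lam i) (i : ℕ) :
    lam i * e i ^ 2 / (lam i + α) ^ 2 = W lam (1/2) α i * e i ^ 2 := by
  unfold W
  norm_num [Real.rpow_one, Real.rpow_zero]
  ring

private lemma dataErr_summable {lam e : ℕ → ℝ} {p α : ℝ} (hlam : ∀ i, 0 < lam i)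
    (hα : 0 < α) (hp : 0 ≤ p) (hp2 : p ≤ 1/2)
    (he : Summable fun i => lam i ^ (2 * p) * e i ^ 2) :
    Summable fun i => lam i * e i ^ 2 / (lam i + α) ^ 2 :=
  (psiN_summable (q := 1/2) hlam hα hp hp2 (by linarith) he).congr
    fun i => (data_eq_W lam e α hlam i).symm

private lemma dataErrSq_le {lam e : ℕ → ℝ} {Λ p q CN α : ℝ}
    (hlam : ∀ i, 0 < lam i) (hlam2 : ∀ i, lam i ≤ Λ) (hα : α ∈ Set.Ioo (0:ℝ) Λ)
    (hp : 0 ≤ p) (hp2 : p ≤ 1/2) (hq0 : 0 ≤ q) (hq : q ≤ 1/2) (hq1 : p ≤ q) (hq2 : q ≤ p + 1)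
    (hCN : 0 ≤ CN)
    (he : Summable fun i => lam i ^ (2 * p) * e i ^ 2)
    (hnoise : noiseCondC lam e Λ (2 * q) CN) :
    dataErrSq lam e α ≤ (1 + 4 * CN) * psiHDsq lam e q α := by
  obtain ⟨hα0, hαΛ⟩ := hα
  have hΨsum := psiN_summable hlam hα0 hp hq1 hq2 he
  have hΨeq := psiHDsq_eq lam e q α
  have hΨnn : 0 ≤ psiHDsq lam e q α := by
    rw [hΨeq]
    exact tsum_nonneg fun i => mul_nonneg (W_nonneg hα0.le hlam i) (sq_nonneg _)
  have hfnn : ∀ i, 0 ≤ lam i * e i ^ 2 / (lam i + α) ^ 2 := fun i =>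
    div_nonneg (mul_nonneg (hlam i).le (sq_nonneg _)) (sq_nonneg _)
  have hfsum := dataErr_summable hlam hα0 hp hp2 he
  rw [dataErrSq, tsum_split hfnn hfsum lam α]
  -- head bound
  have head_le : (∑' i, if lam i ≤ α then lam i * e i ^ 2 / (lam i + α) ^ 2 else 0)
      ≤ psiHDsq lam e q α := by
    rw [hΨeq]
    have key : ∀ i, (if lam i ≤ α then lam i * e i ^ 2 / (lam i + α) ^ 2 else 0)
        ≤ W lam q α i * e i ^ 2 := by
      intro i
      by_cases h : lam i ≤ α
      · rw [if_pos h]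
        have hl := hlam i
        have hnum : lam i ≤ lam i ^ (2 * q) * α ^ (1 - 2 * q) := by
          have h5 : lam i ^ (1 - 2 * q) ≤ α ^ (1 - 2 * q) :=
            Real.rpow_le_rpow hl.le h (by linarith)
          calc lam i = lam i ^ (2 * q) * lam i ^ (1 - 2 * q) := by
                rw [← Real.rpow_add hl]; norm_num
            _ ≤ lam i ^ (2 * q) * α ^ (1 - 2 * q) :=
                mul_le_mul_of_nonneg_left h5 (Real.rpow_nonneg hl.le _)
        unfold W
        rw [div_mul_eq_mul_div]
        gcongr
      · rw [if_neg h]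
        exact mul_nonneg (W_nonneg hα0.le hlam i) (sq_nonneg _)
    exact Summable.tsum_le_tsum key (summable_of_le (fun i => by split; exacts [hfnn i, le_rfl]) key hΨsum) hΨsum
  -- tail bound
  have tail_le : (∑' i, if α < lam i then lam i * e i ^ 2 / (lam i + α) ^ 2 else 0)
      ≤ 4 * CN * psiHDsq lam e q α := by
    have hXnn : ∀ i, 0 ≤ (if α < lam i then e i ^ 2 / lam i else 0) := fun i => by
      split
      · exact div_nonneg (sq_nonneg _) (hlam i).le
      · exact le_rfl
    have hXsum : Summable (fun i => if α < lam i then e i ^ 2 / lam i else 0) := by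
      apply summable_of_le hXnn _ (he.mul_left (α ^ (-(2 * p + 1))))
      intro i
      by_cases h : α < lam i
      · rw [if_pos h]
        have hl := hlam i
        have e2 : e i ^ 2 / lam i = lam i ^ (-(2 * p + 1)) * (lam i ^ (2 * p) * e i ^ 2) := by
          rw [show lam i ^ (-(2*p+1)) * (lam i ^ (2*p) * e i ^2)
              = lam i ^ (-(2*p+1)) * lam i ^ (2*p) * e i ^2 by ring, ← Real.rpow_add hl,
            show (-(2*p+1) + 2*p : ℝ) = -1 by ring, Real.rpow_neg_one]
          ring
        rw [e2]
        apply mul_le_mul_of_nonneg_right _ (mul_nonneg (Real.rpow_nonneg hl.le _) (sq_nonneg _))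
        exact Real.rpow_le_rpow_of_nonpos hα0 h.le (by linarith)
      · rw [if_neg h]
        exact mul_nonneg (Real.rpow_nonneg hα0.le _)
          (mul_nonneg (Real.rpow_nonneg (hlam i).le _) (sq_nonneg _))
    -- tail(f) ≤ X
    have t1 : (∑' i, if α < lam i then lam i * e i ^ 2 / (lam i + α) ^ 2 else 0)
        ≤ ∑' i, (if α < lam i then e i ^ 2 / lam i else 0) := by
      apply Summable.tsum_le_tsum _ (summable_of_le (fun i => by split; exacts [hfnn i, le_rfl]) _ hXsum) hXsum
      all_goals
        intro i
        by_cases h : α < lam i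
        · rw [if_pos h, if_pos h]
          have hl := hlam i
          have hd2 : (0:ℝ) < lam i ^ 2 := by positivity
          have hd1 : (0:ℝ) < (lam i + α) ^ 2 := by positivity
          calc lam i * e i ^ 2 / (lam i + α) ^ 2 ≤ lam i * e i ^ 2 / lam i ^ 2 := by
                apply div_le_div_of_nonneg_left (mul_nonneg hl.le (sq_nonneg _)) hd2
                nlinarith
            _ = e i ^ 2 / lam i := by
                rw [sq (lam i), mul_div_mul_left _ _ hl.ne']
        · rw [if_neg h, if_neg h]
    -- Y ≤ 4 α^{2q+1} Ψ
    have t3 : (∑' i, if lam i ≤ α then lam i ^ (2 * q) * e i ^ 2 else 0)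
        ≤ 4 * α ^ (2 * q + 1) * psiHDsq lam e q α := by
      rw [hΨeq]
      apply tsum_le_const_mul _ _ hΨsum
      · intro i; split
        · exact mul_nonneg (Real.rpow_nonneg (hlam _).le _) (sq_nonneg _)
        · exact le_rfl
      · intro i
        by_cases h : lam i ≤ α
        · rw [if_pos h]
          have hl := hlam i
          have hαsq : α ^ (2 * q + 1) * α ^ (1 - 2 * q) = α ^ 2 := by
            rw [← Real.rpow_add hα0, show (2 * q + 1 + (1 - 2 * q) : ℝ) = 2 by ring, rpow_two']
          have e3 : 4 * α ^ (2 * q + 1) * (W lam q α i * e i ^ 2)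
              = 4 * (α ^ (2 * q + 1) * α ^ (1 - 2 * q)) * (lam i ^ (2 * q) * e i ^ 2)
                / (lam i + α) ^ 2 := by
            unfold W; ring
          rw [e3, hαsq]
          have hd1 : (0:ℝ) < (lam i + α) ^ 2 := by positivity
          rw [le_div_iff₀ hd1]
          have h4 : (lam i + α) ^ 2 ≤ 4 * α ^ 2 := by nlinarith
          have h5 := mul_le_mul_of_nonneg_left h4
            (mul_nonneg (Real.rpow_nonneg hl.le (2 * q)) (sq_nonneg (e i)))
          nlinarith [h5]
        · rw [if_neg h]
          have h7 : (0:ℝ) ≤ W lam q α i * e i ^ 2 :=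
            mul_nonneg (W_nonneg hα0.le hlam i) (sq_nonneg (e i))
          have h6 : (0:ℝ) ≤ 4 * α ^ (2 * q + 1) := by positivity
          exact mul_nonneg h6 h7
    -- noise condition
    have hnc := hnoise α ⟨hα0, hαΛ⟩
    have hαp : (0:ℝ) < α ^ (2 * q + 1) := Real.rpow_pos_of_pos hα0 _
    have t4 : (∑' i, if α < lam i then e i ^ 2 / lam i else 0)
        ≤ 4 * CN * psiHDsq lam e q α := by
      apply le_of_mul_le_mul_left _ hαp
      calc α ^ (2 * q + 1) * ∑' i, (if α < lam i then e i ^ 2 / lam i else 0)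
          ≤ CN * ∑' i, (if lam i ≤ α then lam i ^ (2 * q) * e i ^ 2 else 0) := hnc
        _ ≤ CN * (4 * α ^ (2 * q + 1) * psiHDsq lam e q α) :=
            mul_le_mul_of_nonneg_left t3 hCN
        _ = α ^ (2 * q + 1) * (4 * CN * psiHDsq lam e q α) := by ring
    linarith
  linarith


private lemma xdag_sq_eq {lam xdag ω : ℕ → ℝ} {μ : ℝ} (hlam : ∀ i, 0 < lam i)
    (hsrc : ∀ i, xdag i = lam i ^ μ * ω i) (i : ℕ) :
    xdag i ^ 2 = lam i ^ (2 * μ) * ω i ^ 2 := by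
  have hl := hlam i
  have h2 : (lam i ^ μ) ^ 2 = lam i ^ (2 * μ) := by
    rw [← Real.rpow_natCast (lam i ^ μ) 2, ← Real.rpow_mul hl.le]
    norm_num [mul_comm]
  rw [hsrc i, mul_pow, h2]

private lemma xdag_summable {lam xdag ω : ℕ → ℝ} {Λ μ : ℝ} (hlam : ∀ i, 0 < lam i)
    (hlam2 : ∀ i, lam i ≤ Λ) (hμ : 0 ≤ μ)
    (hsrc : ∀ i, xdag i = lam i ^ μ * ω i) (hω : Summable fun i => ω i ^ 2) :
    Summable fun i => xdag i ^ 2 := by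
  apply summable_of_le (fun i => sq_nonneg _) _ (hω.mul_left ((max 1 Λ) ^ (2 * μ)))
  intro i
  rw [xdag_sq_eq hlam hsrc i]
  apply mul_le_mul_of_nonneg_right _ (sq_nonneg _)
  exact Real.rpow_le_rpow (hlam i).le (le_trans (hlam2 i) (le_max_right _ _)) (by linarith)

private lemma approx_summable {lam xdag : ℕ → ℝ} {α : ℝ} (hlam : ∀ i, 0 < lam i) (hα : 0 < α)
    (hx : Summable fun i => xdag i ^ 2) :
    Summable fun i => α ^ 2 * xdag i ^ 2 / (lam i + α) ^ 2 := by
  apply summable_of_le (fun i => div_nonneg (mul_nonneg (sq_nonneg _) (sq_nonneg _)) (sq_nonneg _)) _ hx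
  intro i
  have hl := hlam i
  have hd : (0:ℝ) < (lam i + α) ^ 2 := by positivity
  rw [div_le_iff₀ hd]
  have h1 : α ^ 2 ≤ (lam i + α) ^ 2 := by nlinarith
  nlinarith [mul_le_mul_of_nonneg_right h1 (sq_nonneg (xdag i))]

private lemma approxErrSq_le {lam xdag ω : ℕ → ℝ} {Λ q μ Cr α : ℝ}
    (hlam : ∀ i, 0 < lam i) (hlam2 : ∀ i, lam i ≤ Λ) (hα : α ∈ Set.Ioo (0:ℝ) Λ)
    (hμ : 0 ≤ μ) (hq0 : 0 ≤ q) (hq3 : q ≤ 1 / 2 - μ)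
    (hsrc : ∀ i, xdag i = lam i ^ μ * ω i) (hω : Summable fun i => ω i ^ 2)
    (hCr : 0 < Cr)
    (hreg : Cr * ∑' i, (if lam i ≤ α then xdag i ^ 2 else 0)
      ≤ α ^ 2 * ∑' i, (if α < lam i then xdag i ^ 2 / lam i ^ 2 else 0)) :
    approxErrSq lam xdag α ≤ (4 + 4 / Cr) * psiHDsq lam (yCoeff lam xdag) q α := by
  obtain ⟨hα0, hαΛ⟩ := hα
  have hx := xdag_summable hlam hlam2 hμ hsrc hω
  have hΨsum := psiS_summable hlam hsrc hω hα0 hμ hq0 hq3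
  have hΨeq := psiHDsq_eq lam (yCoeff lam xdag) q α
  have hann : ∀ i, 0 ≤ α ^ 2 * xdag i ^ 2 / (lam i + α) ^ 2 := fun i =>
    div_nonneg (mul_nonneg (sq_nonneg _) (sq_nonneg _)) (sq_nonneg _)
  have hasum := approx_summable hlam hα0 hx
  -- key : α² * Xt ≤ 4 Ψs   via pointwise α² (x²/l²) ≤ 4 W y² on the tail
  have hXtnn : ∀ i, 0 ≤ (if α < lam i then xdag i ^ 2 / lam i ^ 2 else 0) := fun i => by
    split
    · exact div_nonneg (sq_nonneg _) (sq_nonneg _)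
    · exact le_rfl
  have hXtsum : Summable (fun i => if α < lam i then xdag i ^ 2 / lam i ^ 2 else 0) := by
    apply summable_of_le hXtnn _ (hx.mul_left ((α ^ 2)⁻¹))
    intro i
    by_cases h : α < lam i
    · rw [if_pos h]
      have hl := hlam i
      have h1 : α ^ 2 ≤ lam i ^ 2 := by nlinarith
      calc xdag i ^ 2 / lam i ^ 2 ≤ xdag i ^ 2 / α ^ 2 :=
            div_le_div_of_nonneg_left (sq_nonneg _) (by positivity) h1
        _ = (α ^ 2)⁻¹ * xdag i ^ 2 := by rw [div_eq_inv_mul]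
    · rw [if_neg h]
      positivity
  have hptwise : ∀ i, α ^ 2 * (if α < lam i then xdag i ^ 2 / lam i ^ 2 else 0)
      ≤ 4 * (W lam q α i * (yCoeff lam xdag i) ^ 2) := by
    intro i
    have hl := hlam i
    have hWy : (0:ℝ) ≤ W lam q α i * (yCoeff lam xdag i) ^ 2 :=
      mul_nonneg (W_nonneg hα0.le hlam i) (sq_nonneg _)
    by_cases h : α < lam i
    · rw [if_pos h]
      have hy2 : (yCoeff lam xdag i) ^ 2 = lam i * xdag i ^ 2 := by
        unfold yCoeff
        rw [mul_pow, Real.sq_sqrt hl.le]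
      have hα2 : α ^ 2 ≤ α ^ (1 - 2 * q) * (lam i ^ (2 * q) * lam i) := by
        have hpow : α ^ (1 + 2 * q) ≤ lam i ^ (1 + 2 * q) :=
          Real.rpow_le_rpow hα0.le h.le (by linarith)
        have e1 : α ^ (1 - 2 * q) * α ^ (1 + 2 * q) = α ^ 2 := by
          rw [← Real.rpow_add hα0, show (1 - 2 * q + (1 + 2 * q) : ℝ) = 2 by ring, rpow_two']
        have e2 : lam i ^ (2 * q) * lam i = lam i ^ (1 + 2 * q) := by
          have h3 := Real.rpow_add hl 1 (2 * q)
          rw [Real.rpow_one] at h3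
          rw [h3]; ring
        calc α ^ 2 = α ^ (1 - 2 * q) * α ^ (1 + 2 * q) := e1.symm
          _ ≤ α ^ (1 - 2 * q) * lam i ^ (1 + 2 * q) :=
              mul_le_mul_of_nonneg_left hpow (Real.rpow_nonneg hα0.le _)
          _ = α ^ (1 - 2 * q) * (lam i ^ (2 * q) * lam i) := by rw [e2]
      have e4 : 4 * (W lam q α i * (yCoeff lam xdag i) ^ 2)
          = 4 * (α ^ (1 - 2 * q) * (lam i ^ (2 * q) * lam i)) * xdag i ^ 2
            / (lam i + α) ^ 2 := by
        unfold W; rw [hy2]; ring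
      have hd1 : (0:ℝ) < (lam i + α) ^ 2 := by positivity
      have hd2 : (0:ℝ) < lam i ^ 2 := by positivity
      rw [e4, show α ^ 2 * (xdag i ^ 2 / lam i ^ 2) = α ^ 2 * xdag i ^ 2 / lam i ^ 2 by ring,
        div_le_div_iff₀ hd2 hd1]
      have h4 : (lam i + α) ^ 2 ≤ 4 * lam i ^ 2 := by nlinarith
      have h6 := mul_le_mul_of_nonneg_right hα2 (sq_nonneg (xdag i))
      have h9 : (0:ℝ) ≤ α ^ (1 - 2 * q) * (lam i ^ (2 * q) * lam i) * xdag i ^ 2 :=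
        mul_nonneg (mul_nonneg (Real.rpow_nonneg hα0.le _)
          (mul_nonneg (Real.rpow_nonneg hl.le _) hl.le)) (sq_nonneg _)
      nlinarith [mul_le_mul h6 h4 (sq_nonneg (lam i + α)) h9]
    · rw [if_neg h, mul_zero]
      linarith [hWy]
  -- α² Xt ≤ 4 Ψs
  have hT : α ^ 2 * (∑' i, if α < lam i then xdag i ^ 2 / lam i ^ 2 else 0)
      ≤ 4 * psiHDsq lam (yCoeff lam xdag) q α := by
    rw [hΨeq, ← tsum_mul_left]
    exact tsum_le_const_mul (fun i => mul_nonneg (sq_nonneg _) (hXtnn i)) hptwise hΨsum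
  have hΨnn : 0 ≤ psiHDsq lam (yCoeff lam xdag) q α := by
    rw [hΨeq]
    exact tsum_nonneg fun i => mul_nonneg (W_nonneg hα0.le hlam i) (sq_nonneg _)
  have hXh : Summable (fun i => if lam i ≤ α then xdag i ^ 2 else 0) :=
    summable_of_le (fun i => by split; exacts [sq_nonneg _, le_rfl])
      (fun i => by split; exacts [le_rfl, sq_nonneg _]) hx
  rw [approxErrSq, tsum_split hann hasum lam α]
  have head_le : (∑' i, if lam i ≤ α then α ^ 2 * xdag i ^ 2 / (lam i + α) ^ 2 else 0)
      ≤ 4 / Cr * psiHDsq lam (yCoeff lam xdag) q α := by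
    have key : ∀ i, (if lam i ≤ α then α ^ 2 * xdag i ^ 2 / (lam i + α) ^ 2 else 0)
        ≤ (if lam i ≤ α then xdag i ^ 2 else 0) := by
      intro i
      by_cases h : lam i ≤ α
      · rw [if_pos h, if_pos h]
        have hl := hlam i
        have hd1 : (0:ℝ) < (lam i + α) ^ 2 := by positivity
        rw [div_le_iff₀ hd1]
        have h1 : α ^ 2 ≤ (lam i + α) ^ 2 := by nlinarith
        nlinarith [mul_le_mul_of_nonneg_right h1 (sq_nonneg (xdag i))]
      · rw [if_neg h, if_neg h]
    have s1 : (∑' i, if lam i ≤ α then α ^ 2 * xdag i ^ 2 / (lam i + α) ^ 2 else 0)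
        ≤ ∑' i, (if lam i ≤ α then xdag i ^ 2 else 0) :=
      Summable.tsum_le_tsum key (summable_of_le
        (fun i => by split; exacts [hann i, le_rfl]) key hXh) hXh
    have s2 : (∑' i, (if lam i ≤ α then xdag i ^ 2 else 0))
        ≤ (α ^ 2 * ∑' i, (if α < lam i then xdag i ^ 2 / lam i ^ 2 else 0)) / Cr := by
      rw [le_div_iff₀ hCr]
      linarith [hreg]
    have s3 : (α ^ 2 * ∑' i, (if α < lam i then xdag i ^ 2 / lam i ^ 2 else 0)) / Cr
        ≤ (4 * psiHDsq lam (yCoeff lam xdag) q α) / Cr := by gcongr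
    calc _ ≤ _ := s1
      _ ≤ _ := s2
      _ ≤ _ := s3
      _ = 4 / Cr * psiHDsq lam (yCoeff lam xdag) q α := by ring
  have tail_le : (∑' i, if α < lam i then α ^ 2 * xdag i ^ 2 / (lam i + α) ^ 2 else 0)
      ≤ 4 * psiHDsq lam (yCoeff lam xdag) q α := by
    have key : ∀ i, (if α < lam i then α ^ 2 * xdag i ^ 2 / (lam i + α) ^ 2 else 0)
        ≤ α ^ 2 * (if α < lam i then xdag i ^ 2 / lam i ^ 2 else 0) := by
      intro i
      by_cases h : α < lam i
      · rw [if_pos h, if_pos h]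
        have hl := hlam i
        have hd2 : (0:ℝ) < lam i ^ 2 := by positivity
        calc α ^ 2 * xdag i ^ 2 / (lam i + α) ^ 2 ≤ α ^ 2 * xdag i ^ 2 / lam i ^ 2 := by
              apply div_le_div_of_nonneg_left (mul_nonneg (sq_nonneg _) (sq_nonneg _)) hd2
              nlinarith
          _ = α ^ 2 * (xdag i ^ 2 / lam i ^ 2) := by ring
      · rw [if_neg h, if_neg h, mul_zero]
    calc (∑' i, if α < lam i then α ^ 2 * xdag i ^ 2 / (lam i + α) ^ 2 else 0)
        ≤ ∑' i, α ^ 2 * (if α < lam i then xdag i ^ 2 / lam i ^ 2 else 0) :=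
          Summable.tsum_le_tsum key (summable_of_le
            (fun i => by split; exacts [hann i, le_rfl]) key (hXtsum.mul_left _)) (hXtsum.mul_left _)
      _ = α ^ 2 * ∑' i, (if α < lam i then xdag i ^ 2 / lam i ^ 2 else 0) := tsum_mul_left
      _ ≤ 4 * psiHDsq lam (yCoeff lam xdag) q α := hT
  linarith


private lemma totalErrSq_le {lam xdag e : ℕ → ℝ} {α : ℝ} (hlam : ∀ i, 0 < lam i) (hα : 0 < α)
    (hd : Summable fun i => lam i * e i ^ 2 / (lam i + α) ^ 2)
    (ha : Summable fun i => α ^ 2 * xdag i ^ 2 / (lam i + α) ^ 2) :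
    totalErrSq lam xdag e α ≤ 2 * dataErrSq lam e α + 2 * approxErrSq lam xdag α := by
  have key : ∀ i, (Real.sqrt (lam i) * e i - α * xdag i) ^ 2 / (lam i + α) ^ 2
      ≤ 2 * (lam i * e i ^ 2 / (lam i + α) ^ 2) + 2 * (α ^ 2 * xdag i ^ 2 / (lam i + α) ^ 2) := by
    intro i
    have hl := hlam i
    have hd1 : (0:ℝ) < (lam i + α) ^ 2 := by positivity
    have hnum : (Real.sqrt (lam i) * e i - α * xdag i) ^ 2
        ≤ 2 * (lam i * e i ^ 2) + 2 * (α ^ 2 * xdag i ^ 2) := by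
      nlinarith [sq_nonneg (Real.sqrt (lam i) * e i + α * xdag i), Real.sq_sqrt hl.le]
    have h2 : (2 * (lam i * e i ^ 2) + 2 * (α ^ 2 * xdag i ^ 2)) / (lam i + α) ^ 2
        = 2 * (lam i * e i ^ 2 / (lam i + α) ^ 2) + 2 * (α ^ 2 * xdag i ^ 2 / (lam i + α) ^ 2) := by
      ring
    rw [← h2]
    exact (div_le_div_iff_of_pos_right hd1).mpr hnum
  have hsum := (hd.mul_left 2).add (ha.mul_left 2)
  calc totalErrSq lam xdag e α
      ≤ ∑' i, (2 * (lam i * e i ^ 2 / (lam i + α) ^ 2)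
          + 2 * (α ^ 2 * xdag i ^ 2 / (lam i + α) ^ 2)) :=
        Summable.tsum_le_tsum key (summable_of_le (fun i => div_nonneg (sq_nonneg _) (sq_nonneg _)) key hsum) hsum
    _ = 2 * dataErrSq lam e α + 2 * approxErrSq lam xdag α := by
        rw [Summable.tsum_add (hd.mul_left 2) (ha.mul_left 2), tsum_mul_left, tsum_mul_left]
        rfl

private lemma summable_weighted_sq_add {w b c : ℕ → ℝ} (hw : ∀ i, 0 ≤ w i)
    (hb : Summable fun i => w i * b i ^ 2) (hc : Summable fun i => w i * c i ^ 2) :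
    Summable fun i => w i * (b i + c i) ^ 2 := by
  apply summable_of_le (fun i => mul_nonneg (hw i) (sq_nonneg _)) _
    ((hb.mul_left 2).add (hc.mul_left 2))
  intro i
  have h : (b i + c i) ^ 2 ≤ 2 * b i ^ 2 + 2 * c i ^ 2 := by nlinarith [sq_nonneg (b i - c i)]
  calc w i * (b i + c i) ^ 2 ≤ w i * (2 * b i ^ 2 + 2 * c i ^ 2) :=
        mul_le_mul_of_nonneg_left h (hw i)
    _ = 2 * (w i * b i ^ 2) + 2 * (w i * c i ^ 2) := by ring

private lemma psiHDsq_nonneg {lam c : ℕ → ℝ} {q α : ℝ} (hα : 0 ≤ α) (hlam : ∀ i, 0 < lam i) :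
    0 ≤ psiHDsq lam c q α := by
  rw [psiHDsq_eq]
  exact tsum_nonneg fun i => mul_nonneg (W_nonneg hα hlam i) (sq_nonneg _)

private lemma sq_le_of_sqrt_le {a b : ℝ} (ha : 0 ≤ a) (hb : 0 ≤ b)
    (h : Real.sqrt a ≤ Real.sqrt b) : a ≤ b := by
  have h2 := pow_le_pow_left₀ (Real.sqrt_nonneg a) h 2
  rwa [Real.sq_sqrt ha, Real.sq_sqrt hb] at h2



set_option maxHeartbeats 2000000 in
/-- optimal rate for the modified heuristic discrepancy rule
under the regularity condition. -/
theorem statement8 (Λ p q μ : ℝ) (hΛ : 0 < Λ) (hp : p ∈ Set.Icc (0 : ℝ) (1 / 2))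
    (hμ : μ ∈ Set.Icc (0 : ℝ) 1)
    (hq1 : p ≤ q) (hq2 : q ≤ p + 1) (hq3 : q ≤ 1 / 2 - μ)
    (lam xdag ω : ℕ → ℝ) (hlam : ∀ i, 0 < lam i ∧ lam i ≤ Λ)
    (hsrc : ∀ i, xdag i = lam i ^ μ * ω i) (hω : Summable fun i => ω i ^ 2)
    (hQy : ∃ i, xdag i ≠ 0)
    (hreg : regCond lam xdag Λ)
    (CN : ℝ) (hCN : 0 < CN) :
    ∃ C > 0, ∃ η₀ > 0, ∀ e : ℕ → ℝ,
      (Summable fun i => lam i ^ (2 * p) * e i ^ 2) →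
      noiseCondC lam e Λ (2 * q) CN →
      eta lam e p ≤ η₀ →
      ∀ αstar ∈ Set.Ioo (0 : ℝ) Λ,
        (∀ α ∈ Set.Ioo (0 : ℝ) Λ,
          psiHD lam (ydCoeff lam xdag e) q αstar ≤ psiHD lam (ydCoeff lam xdag e) q α) →
        totalErr lam xdag e αstar ≤ C * eta lam e p ^ (2 * μ / (2 * μ + 2 * p + 1)) := by
  obtain ⟨hp0, hp2⟩ := hp
  obtain ⟨hμ0, hμ1⟩ := hμ
  obtain ⟨Cr, hCr, hregC⟩ := hreg
  have hlam1 : ∀ i, 0 < lam i := fun i => (hlam i).1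
  have hlam2 : ∀ i, lam i ≤ Λ := fun i => (hlam i).2
  have hq0 : 0 ≤ q := le_trans hp0 hq1
  have hqh : q ≤ 1 / 2 := by linarith
  have hΩ0 : 0 ≤ ∑' i, ω i ^ 2 := tsum_nonneg fun i => sq_nonneg _
  have hx : Summable fun i => xdag i ^ 2 := xdag_summable hlam1 hlam2 hμ0 hsrc hω
  have hs0 : (0:ℝ) < 2 * μ + 2 * p + 1 := by linarith
  have hsne : (2 * μ + 2 * p + 1 : ℝ) ≠ 0 := ne_of_gt hs0
  have hCrpos : (0:ℝ) < 8 / Cr := by positivity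
  have hKK : (0:ℝ) < 10 + 8 * CN + 8 / Cr := by linarith
  refine ⟨1 + Real.sqrt ((10 + 8 * CN + 8 / Cr) * (7 + 7 * ∑' i, ω i ^ 2))
      + Real.sqrt ((max 1 Λ) ^ (2 * μ) * ∑' i, ω i ^ 2), by positivity,
    min 1 ((Λ / 2) ^ ((2 * μ + 2 * p + 1) / 2)),
    lt_min one_pos (Real.rpow_pos_of_pos (by linarith) _), ?_⟩
  intro e he hnoise hη αstar hαmem hmin
  obtain ⟨hαs0, hαsΛ⟩ := hαmem
  have hetaSq0 : 0 ≤ etaSq lam e p :=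
    tsum_nonneg fun i => mul_nonneg (Real.rpow_nonneg (hlam1 i).le _) (sq_nonneg _)
  have hSsum : ∀ β : ℝ, 0 < β → Summable fun i => W lam q β i * (yCoeff lam xdag i) ^ 2 :=
    fun β hβ => psiS_summable hlam1 hsrc hω hβ hμ0 hq0 hq3
  have hNsum : ∀ β : ℝ, 0 < β → Summable fun i => W lam q β i * e i ^ 2 :=
    fun β hβ => psiN_summable hlam1 hβ hp0 hq1 hq2 he
  have hDsum : ∀ β : ℝ, 0 < β → Summable fun i => W lam q β i * (ydCoeff lam xdag e i) ^ 2 := by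
    intro β hβ
    have h := summable_weighted_sq_add (W_nonneg hβ.le hlam1) (hSsum β hβ) (hNsum β hβ)
    exact h.congr fun i => by simp [ydCoeff, yCoeff]
  have htri1 : ∀ β : ℝ, 0 < β → psiHDsq lam (ydCoeff lam xdag e) q β
      ≤ 2 * psiHDsq lam (yCoeff lam xdag) q β + 2 * psiHDsq lam e q β := by
    intro β hβ
    rw [psiHDsq_eq, psiHDsq_eq, psiHDsq_eq]
    have h := tsum_weighted_sq_add (W_nonneg hβ.le hlam1) (hSsum β hβ) (hNsum β hβ)
    have hcong : ∀ i, W lam q β i * (ydCoeff lam xdag e i) ^ 2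
        = W lam q β i * (yCoeff lam xdag i + e i) ^ 2 := fun i => by
      simp [ydCoeff, yCoeff]
    rw [tsum_congr hcong]
    exact h
  have htri2 : ∀ β : ℝ, 0 < β → psiHDsq lam e q β
      ≤ 2 * psiHDsq lam (ydCoeff lam xdag e) q β + 2 * psiHDsq lam (yCoeff lam xdag) q β := by
    intro β hβ
    rw [psiHDsq_eq, psiHDsq_eq, psiHDsq_eq]
    have hneg : Summable fun i => W lam q β i * (-(yCoeff lam xdag i)) ^ 2 := by
      simpa [neg_sq] using hSsum β hβ
    have h := tsum_weighted_sq_add (W_nonneg hβ.le hlam1) (hDsum β hβ) hneg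
    have hc1 : ∀ i, W lam q β i * (ydCoeff lam xdag e i + -(yCoeff lam xdag i)) ^ 2
        = W lam q β i * e i ^ 2 := fun i => by
      have h5 : ydCoeff lam xdag e i + -(yCoeff lam xdag i) = e i := by
        simp [ydCoeff, yCoeff]
      rw [h5]
    have hc2 : ∀ i, W lam q β i * (-(yCoeff lam xdag i)) ^ 2
        = W lam q β i * (yCoeff lam xdag i) ^ 2 := fun i => by rw [neg_sq]
    rw [tsum_congr hc1, tsum_congr hc2] at h
    exact h
  have htri3 : ∀ β : ℝ, 0 < β → psiHDsq lam (yCoeff lam xdag) q β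
      ≤ 2 * psiHDsq lam (ydCoeff lam xdag e) q β + 2 * psiHDsq lam e q β := by
    intro β hβ
    rw [psiHDsq_eq, psiHDsq_eq, psiHDsq_eq]
    have hneg : Summable fun i => W lam q β i * (-(e i)) ^ 2 := by
      simpa [neg_sq] using hNsum β hβ
    have h := tsum_weighted_sq_add (W_nonneg hβ.le hlam1) (hDsum β hβ) hneg
    have hc1 : ∀ i, W lam q β i * (ydCoeff lam xdag e i + -(e i)) ^ 2
        = W lam q β i * (yCoeff lam xdag i) ^ 2 := fun i => by
      have h5 : ydCoeff lam xdag e i + -(e i) = yCoeff lam xdag i := by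
        simp [ydCoeff, yCoeff]
      rw [h5]
    have hc2 : ∀ i, W lam q β i * (-(e i)) ^ 2 = W lam q β i * e i ^ 2 :=
      fun i => by rw [neg_sq]
    rw [tsum_congr hc1, tsum_congr hc2] at h
    exact h
  rcases eq_or_lt_of_le hetaSq0 with h0 | hpos
  · -- zero noise
    have he0 : ∀ i, e i = 0 := by
      intro i
      have hterm := Summable.le_tsum he i
        (fun j _ => mul_nonneg (Real.rpow_nonneg (hlam1 j).le _) (sq_nonneg _))
      have h0' : etaSq lam e p = 0 := h0.symm
      rw [etaSq] at h0'
      have hlp : 0 < lam i ^ (2 * p) := Real.rpow_pos_of_pos (hlam1 i) _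
      have hsq : e i ^ 2 = 0 := by nlinarith [sq_nonneg (e i)]
      exact sq_eq_zero_iff.mp hsq
    have heta0 : eta lam e p = 0 := by
      rw [eta, ← h0, Real.sqrt_zero]
    rcases eq_or_lt_of_le hμ0 with hμe | hμpos
    · -- μ = 0
      have hexp : 2 * μ / (2 * μ + 2 * p + 1) = 0 := by rw [← hμe]; norm_num
      rw [heta0, hexp, Real.rpow_zero, mul_one]
      have h1 : totalErrSq lam xdag e αstar ≤ (max 1 Λ) ^ (2 * μ) * ∑' i, ω i ^ 2 := by
        have hcong : ∀ i, (Real.sqrt (lam i) * e i - αstar * xdag i) ^ 2 / (lam i + αstar) ^ 2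
            = αstar ^ 2 * xdag i ^ 2 / (lam i + αstar) ^ 2 := fun i => by rw [he0 i]; ring
        rw [totalErrSq, tsum_congr hcong]
        have hle1 : ∀ i, αstar ^ 2 * xdag i ^ 2 / (lam i + αstar) ^ 2 ≤ xdag i ^ 2 := by
          intro i
          have hl := hlam1 i
          have hd1 : (0:ℝ) < (lam i + αstar) ^ 2 := by positivity
          rw [div_le_iff₀ hd1]
          have hh : αstar ^ 2 ≤ (lam i + αstar) ^ 2 := by nlinarith
          nlinarith [mul_le_mul_of_nonneg_right hh (sq_nonneg (xdag i))]
        have hle2 : ∀ i, xdag i ^ 2 ≤ (max 1 Λ) ^ (2 * μ) * ω i ^ 2 := by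
          intro i
          rw [xdag_sq_eq hlam1 hsrc i]
          exact mul_le_mul_of_nonneg_right (Real.rpow_le_rpow (hlam1 i).le
            (le_trans (hlam2 i) (le_max_right _ _)) (by linarith)) (sq_nonneg _)
        calc (∑' i, αstar ^ 2 * xdag i ^ 2 / (lam i + αstar) ^ 2)
            ≤ ∑' i, xdag i ^ 2 :=
              Summable.tsum_le_tsum hle1 (approx_summable hlam1 hαs0 hx) hx
          _ ≤ (max 1 Λ) ^ (2 * μ) * ∑' i, ω i ^ 2 :=
              tsum_le_const_mul (fun i => sq_nonneg _) hle2 hω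
      rw [totalErr]
      calc Real.sqrt (totalErrSq lam xdag e αstar)
          ≤ Real.sqrt ((max 1 Λ) ^ (2 * μ) * ∑' i, ω i ^ 2) := Real.sqrt_le_sqrt h1
        _ ≤ _ := by
            have h2 := Real.sqrt_nonneg ((10 + 8 * CN + 8 / Cr) * (7 + 7 * ∑' i, ω i ^ 2))
            linarith
    · -- μ > 0 : minimality is contradictory
      exfalso
      obtain ⟨i₀, hi₀⟩ := hQy
      have hy0 : yCoeff lam xdag i₀ ≠ 0 :=
        mul_ne_zero (ne_of_gt (Real.sqrt_pos.mpr (hlam1 i₀))) hi₀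
      have hε : 0 < W lam q αstar i₀ * (yCoeff lam xdag i₀) ^ 2 := by
        apply mul_pos
        · unfold W
          exact div_pos (mul_pos (Real.rpow_pos_of_pos (hlam1 i₀) _)
            (Real.rpow_pos_of_pos hαs0 _)) (pow_pos (by linarith [hlam1 i₀]) 2)
        · exact lt_of_le_of_ne (sq_nonneg _) (Ne.symm (pow_ne_zero 2 hy0))
      set ε := W lam q αstar i₀ * (yCoeff lam xdag i₀) ^ 2 with hεdef
      have hcongyd : ∀ β : ℝ, psiHDsq lam (ydCoeff lam xdag e) q β
          = psiHDsq lam (yCoeff lam xdag) q β := by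
        intro β
        unfold psiHDsq
        refine tsum_congr fun i => ?_
        rw [show ydCoeff lam xdag e i = yCoeff lam xdag i from by
          simp [ydCoeff, yCoeff, he0 i]]
      have hεle : ε ≤ psiHDsq lam (ydCoeff lam xdag e) q αstar := by
        rw [hcongyd αstar, psiHDsq_eq]
        exact Summable.le_tsum (hSsum αstar hαs0) i₀
          (fun j _ => mul_nonneg (W_nonneg hαs0.le hlam1 j) (sq_nonneg _))
      have hΩ1 : (0:ℝ) < ∑' i, ω i ^ 2 + 1 := by linarith
      have hδb0 : 0 < ε / (∑' i, ω i ^ 2 + 1) := div_pos hε hΩ1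
      set δ := min (Λ / 2) ((ε / (∑' i, ω i ^ 2 + 1)) ^ (1 / (2 * μ))) with hδdef
      have hδ0 : 0 < δ := lt_min (by linarith) (Real.rpow_pos_of_pos hδb0 _)
      have hδΛ : δ < Λ := lt_of_le_of_lt (min_le_left _ _) (by linarith)
      have hδpow : δ ^ (2 * μ) ≤ ε / (∑' i, ω i ^ 2 + 1) := by
        have h1 : δ ≤ (ε / (∑' i, ω i ^ 2 + 1)) ^ (1 / (2 * μ)) := min_le_right _ _
        have h2 := Real.rpow_le_rpow hδ0.le h1 (by linarith : (0:ℝ) ≤ 2 * μ)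
        rwa [← Real.rpow_mul hδb0.le, one_div,
          inv_mul_cancel₀ (by linarith : (2 * μ : ℝ) ≠ 0), Real.rpow_one] at h2
      have hψδ : psiHDsq lam (ydCoeff lam xdag e) q δ ≤ δ ^ (2 * μ) * ∑' i, ω i ^ 2 := by
        rw [hcongyd δ]
        exact psiS_le hlam1 hsrc hω hδ0 hμ0 hq0 hq3
      have hm := hmin δ ⟨hδ0, hδΛ⟩
      unfold psiHD at hm
      have hsq := sq_le_of_sqrt_le (psiHDsq_nonneg hαs0.le hlam1)
        (psiHDsq_nonneg hδ0.le hlam1) hm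
      have hfin : δ ^ (2 * μ) * ∑' i, ω i ^ 2 < ε := by
        calc δ ^ (2 * μ) * ∑' i, ω i ^ 2
            ≤ (ε / (∑' i, ω i ^ 2 + 1)) * ∑' i, ω i ^ 2 :=
              mul_le_mul_of_nonneg_right hδpow hΩ0
          _ < ε := by
              rw [div_mul_eq_mul_div, div_lt_iff₀ hΩ1]
              nlinarith [hε, hΩ0]
      linarith [hεle, hsq, hψδ, hfin]
  · -- positive noise
    have hh0 : 0 < eta lam e p := Real.sqrt_pos.mpr hpos
    have hsq_eta : eta lam e p ^ 2 = etaSq lam e p := Real.sq_sqrt hetaSq0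
    have hηb : eta lam e p ≤ (Λ / 2) ^ ((2 * μ + 2 * p + 1) / 2) :=
      le_trans hη (min_le_right _ _)
    set α₀ := eta lam e p ^ (2 / (2 * μ + 2 * p + 1)) with hα₀def
    have hα₀0 : 0 < α₀ := Real.rpow_pos_of_pos hh0 _
    have hα₀Λ2 : α₀ ≤ Λ / 2 := by
      calc α₀ ≤ ((Λ / 2) ^ ((2 * μ + 2 * p + 1) / 2)) ^ (2 / (2 * μ + 2 * p + 1)) := by
            rw [hα₀def]
            exact Real.rpow_le_rpow hh0.le hηb (by positivity)
        _ = Λ / 2 := by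
            rw [← Real.rpow_mul (by linarith : (0:ℝ) ≤ Λ / 2)]
            rw [show (2 * μ + 2 * p + 1) / 2 * (2 / (2 * μ + 2 * p + 1)) = 1 from by
              field_simp]
            exact Real.rpow_one _
    have hα₀mem : α₀ ∈ Set.Ioo (0:ℝ) Λ := ⟨hα₀0, by linarith⟩
    have hR0 : 0 ≤ α₀ ^ (2 * μ) := Real.rpow_nonneg hα₀0.le _
    have hRval : etaSq lam e p * α₀ ^ (-(1 + 2 * p)) = α₀ ^ (2 * μ) := by
      rw [hα₀def, ← Real.rpow_mul hh0.le, ← Real.rpow_mul hh0.le, ← hsq_eta, ← rpow_two',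
        ← Real.rpow_add hh0]
      congr 1
      field_simp
      ring
    have hRrho : α₀ ^ (2 * μ)
        = (eta lam e p ^ (2 * μ / (2 * μ + 2 * p + 1))) ^ 2 := by
      rw [hα₀def, ← Real.rpow_mul hh0.le,
        ← Real.rpow_natCast (eta lam e p ^ (2 * μ / (2 * μ + 2 * p + 1))) 2,
        ← Real.rpow_mul hh0.le]
      congr 1
      push_cast
      field_simp
    have hnα₀ : psiHDsq lam e q α₀ ≤ α₀ ^ (2 * μ) := by
      calc psiHDsq lam e q α₀ ≤ α₀ ^ (-(1 + 2 * p)) * etaSq lam e p :=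
            psiN_le hlam1 hα₀0 hp0 hq1 hq2 he
        _ = α₀ ^ (2 * μ) := by rw [← hRval]; ring
    have hsα₀ : psiHDsq lam (yCoeff lam xdag) q α₀ ≤ α₀ ^ (2 * μ) * ∑' i, ω i ^ 2 :=
      psiS_le hlam1 hsrc hω hα₀0 hμ0 hq0 hq3
    have hΨα₀ : psiHDsq lam (ydCoeff lam xdag e) q α₀
        ≤ 2 * (α₀ ^ (2 * μ) * ∑' i, ω i ^ 2) + 2 * α₀ ^ (2 * μ) := by
      have h1 := htri1 α₀ hα₀0
      linarith
    have hm := hmin α₀ hα₀mem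
    unfold psiHD at hm
    have hmin' := sq_le_of_sqrt_le (psiHDsq_nonneg hαs0.le hlam1)
      (psiHDsq_nonneg hα₀0.le hlam1) hm
    have hΨs_nn : 0 ≤ psiHDsq lam (yCoeff lam xdag) q αstar := psiHDsq_nonneg hαs0.le hlam1
    have hΨn_nn : 0 ≤ psiHDsq lam e q αstar := psiHDsq_nonneg hαs0.le hlam1
    have hΩR : 0 ≤ α₀ ^ (2 * μ) * ∑' i, ω i ^ 2 := mul_nonneg hR0 hΩ0
    have hkey : psiHDsq lam e q αstar + psiHDsq lam (yCoeff lam xdag) q αstar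
        ≤ (7 + 7 * ∑' i, ω i ^ 2) * α₀ ^ (2 * μ) := by
      rcases le_or_gt αstar α₀ with hcase | hcase
      · have h2 : psiHDsq lam (yCoeff lam xdag) q αstar
            ≤ α₀ ^ (2 * μ) * ∑' i, ω i ^ 2 := by
          calc psiHDsq lam (yCoeff lam xdag) q αstar
              ≤ αstar ^ (2 * μ) * ∑' i, ω i ^ 2 := psiS_le hlam1 hsrc hω hαs0 hμ0 hq0 hq3
            _ ≤ α₀ ^ (2 * μ) * ∑' i, ω i ^ 2 :=
                mul_le_mul_of_nonneg_right
                  (Real.rpow_le_rpow hαs0.le hcase (by linarith)) hΩ0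
        have h3 := htri2 αstar hαs0
        nlinarith [hmin', hΨα₀, hR0, hΩR]
      · have h3 : psiHDsq lam e q αstar ≤ α₀ ^ (2 * μ) := by
          calc psiHDsq lam e q αstar ≤ αstar ^ (-(1 + 2 * p)) * etaSq lam e p :=
                psiN_le hlam1 hαs0 hp0 hq1 hq2 he
            _ ≤ α₀ ^ (-(1 + 2 * p)) * etaSq lam e p :=
                mul_le_mul_of_nonneg_right
                  (Real.rpow_le_rpow_of_nonpos hα₀0 hcase.le (by linarith)) hetaSq0
            _ = α₀ ^ (2 * μ) := by rw [← hRval]; ring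
        have h4 := htri3 αstar hαs0
        nlinarith [hmin', hΨα₀, hR0, hΩR]
    have hdata := dataErrSq_le hlam1 hlam2 ⟨hαs0, hαsΛ⟩ hp0 hp2 hq0 hqh hq1 hq2 hCN.le he hnoise
    have happrox := approxErrSq_le hlam1 hlam2 ⟨hαs0, hαsΛ⟩ hμ0 hq0 hq3 hsrc hω hCr
      (hregC αstar ⟨hαs0, hαsΛ⟩)
    have htot := totalErrSq_le hlam1 hαs0 (dataErr_summable hlam1 hαs0 hp0 hp2 he)
      (approx_summable hlam1 hαs0 hx)
    have hKb1 : 2 * ((1 + 4 * CN) * psiHDsq lam e q αstar)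
        ≤ (10 + 8 * CN + 8 / Cr) * psiHDsq lam e q αstar := by
      have h9 : 0 ≤ (8 + 8 / Cr) * psiHDsq lam e q αstar :=
        mul_nonneg (by linarith) hΨn_nn
      have h10 : (10 + 8 * CN + 8 / Cr) * psiHDsq lam e q αstar
          = 2 * ((1 + 4 * CN) * psiHDsq lam e q αstar)
            + (8 + 8 / Cr) * psiHDsq lam e q αstar := by ring
      linarith
    have hKb2 : 2 * ((4 + 4 / Cr) * psiHDsq lam (yCoeff lam xdag) q αstar)
        ≤ (10 + 8 * CN + 8 / Cr) * psiHDsq lam (yCoeff lam xdag) q αstar := by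
      have h9 : 0 ≤ (2 + 8 * CN) * psiHDsq lam (yCoeff lam xdag) q αstar :=
        mul_nonneg (by linarith) hΨs_nn
      have h10 : (10 + 8 * CN + 8 / Cr) * psiHDsq lam (yCoeff lam xdag) q αstar
          = 2 * ((4 + 4 / Cr) * psiHDsq lam (yCoeff lam xdag) q αstar)
            + (2 + 8 * CN) * psiHDsq lam (yCoeff lam xdag) q αstar := by ring
      linarith
    have hfinal : totalErrSq lam xdag e αstar
        ≤ (10 + 8 * CN + 8 / Cr) * (7 + 7 * ∑' i, ω i ^ 2) * α₀ ^ (2 * μ) := by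
      calc totalErrSq lam xdag e αstar
          ≤ 2 * dataErrSq lam e αstar + 2 * approxErrSq lam xdag αstar := htot
        _ ≤ 2 * ((1 + 4 * CN) * psiHDsq lam e q αstar)
            + 2 * ((4 + 4 / Cr) * psiHDsq lam (yCoeff lam xdag) q αstar) := by
            linarith [hdata, happrox]
        _ ≤ (10 + 8 * CN + 8 / Cr) * psiHDsq lam e q αstar
            + (10 + 8 * CN + 8 / Cr) * psiHDsq lam (yCoeff lam xdag) q αstar := by
            linarith [hKb1, hKb2]
        _ = (10 + 8 * CN + 8 / Cr)
            * (psiHDsq lam e q αstar + psiHDsq lam (yCoeff lam xdag) q αstar) := by ring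
        _ ≤ (10 + 8 * CN + 8 / Cr) * ((7 + 7 * ∑' i, ω i ^ 2) * α₀ ^ (2 * μ)) :=
            mul_le_mul_of_nonneg_left hkey hKK.le
        _ = (10 + 8 * CN + 8 / Cr) * (7 + 7 * ∑' i, ω i ^ 2) * α₀ ^ (2 * μ) := by ring
    rw [totalErr]
    have hρnn : 0 ≤ eta lam e p ^ (2 * μ / (2 * μ + 2 * p + 1)) :=
      Real.rpow_nonneg hh0.le _
    calc Real.sqrt (totalErrSq lam xdag e αstar)
        ≤ Real.sqrt ((10 + 8 * CN + 8 / Cr) * (7 + 7 * ∑' i, ω i ^ 2) * α₀ ^ (2 * μ)) :=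
          Real.sqrt_le_sqrt hfinal
      _ = Real.sqrt ((10 + 8 * CN + 8 / Cr) * (7 + 7 * ∑' i, ω i ^ 2))
          * eta lam e p ^ (2 * μ / (2 * μ + 2 * p + 1)) := by
          rw [hRrho, Real.sqrt_mul
            (by nlinarith [hKK, hΩ0] : (0:ℝ) ≤ (10 + 8 * CN + 8 / Cr) * (7 + 7 * ∑' i, ω i ^ 2)),
            Real.sqrt_sq hρnn]
      _ ≤ _ :=
          mul_le_mul_of_nonneg_right
            (by linarith [Real.sqrt_nonneg ((max 1 Λ) ^ (2 * μ) * ∑' i, ω i ^ 2)]) hρnn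

end WeakNoise
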